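/- Let Z be a Borel P-ideal on ℕ given as Z = {x ⊆ ℕ : φ_∞(x) = 0} for a lower semicontinuous submeasure φ with φ_∞(x) = inf_n φ(x ∩ [n,∞)), and let r_k = φ({k}). Set U_n = {k : r_k ≤ 1/n} (with U_0 = ℕ). If inf_n φ(U_n) = 0, then a set x ⊆ ℕ belongs to Z if and only if x \ U_n is finite for every n. -/

import Mathlib

/-!
If every `x \ U_n` is finite, then `x ∩ [m, ∞) ⊆ U_n` for large `m`, so
`φ_∞(x) ≤ inf_n φ(U_n) = 0`. Conversely, every point of `x \ U_n` has mass `> 1/n`, so if there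
were infinitely many of them each tail `x ∩ [m, ∞)` would have `φ`-value at least `1/n`.
-/

open scoped ENNReal

open Set

theorem monotone_of_le_union {α β : Type*} [Preorder β] {φ : Set α → β}
    (h : ∀ x y : Set α, φ x ≤ φ (x ∪ y)) : Monotone φ := fun s t hst => by
  simpa only [union_eq_self_of_subset_left hst] using h s t

theorem Set.Finite.exists_inter_Ici_subset {α : Type*} [LinearOrder α] [Nonempty α]
    [NoMaxOrder α] {x u : Set α} (h : (x \ u).Finite) : ∃ m, x ∩ Ici m ⊆ u := by
  obtain ⟨b, hb⟩ := h.bddAbove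
  obtain ⟨m, hbm⟩ := exists_gt b
  refine ⟨m, fun k ⟨hkx, hmk⟩ => ?_⟩
  by_contra hku
  exact (hbm.trans_le hmk).not_ge (hb ⟨hkx, hku⟩)

theorem iInf_inter_Ici_le_of_diff_finite {φ : Set ℕ → ℝ≥0∞} (hφ : Monotone φ)
    {x u : Set ℕ} (h : (x \ u).Finite) : ⨅ m : ℕ, φ (x ∩ Ici m) ≤ φ u := by
  obtain ⟨m, hm⟩ := h.exists_inter_Ici_subset
  exact (iInf_le _ m).trans (hφ hm)

theorem finite_setOf_le_singleton_of_iInf_eq_zero {φ : Set ℕ → ℝ≥0∞} (hφ : Monotone φ)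
    {x : Set ℕ} (hx : ⨅ m : ℕ, φ (x ∩ Ici m) = 0) {ε : ℝ≥0∞} (hε : 0 < ε) :
    {k ∈ x | ε ≤ φ {k}}.Finite := by
  by_contra hinf
  have hbound : ∀ m : ℕ, ε ≤ φ (x ∩ Ici m) := fun m => by
    obtain ⟨k, ⟨hkx, hεk⟩, hmk⟩ := Set.Infinite.exists_gt hinf m
    exact hεk.trans (hφ (singleton_subset_iff.2 ⟨hkx, hmk.le⟩))
  exact hε.not_ge ((le_iInf hbound).trans_eq hx)

theorem exh_eq_iff_diff_finite_of_inf_eq_zero_general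
    (φ : Set ℕ → ℝ≥0∞)
    (hmono : ∀ x y : Set ℕ, φ x ≤ φ (x ∪ y))
    (U : ℕ → Set ℕ)
    (hU0 : U 0 = Set.univ)
    (hU : ∀ n : ℕ, 0 < n → U n = {k : ℕ | φ {k} ≤ 1 / (n : ℝ≥0∞)})
    (hinf : (⨅ n : ℕ, φ (U n)) = 0) :
    ∀ x : Set ℕ,
      (⨅ n : ℕ, φ (x ∩ Set.Ici n)) = 0 ↔ ∀ n : ℕ, (x \ U n).Finite := by
  intro x
  have hφ := monotone_of_le_union hmono
  constructor
  · intro hx n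
    rcases n.eq_zero_or_pos with rfl | hn
    · simp [hU0]
    · refine (finite_setOf_le_singleton_of_iInf_eq_zero hφ hx
        (ENNReal.div_pos one_ne_zero (ENNReal.natCast_ne_top n))).subset ?_
      rintro k ⟨hkx, hkU⟩
      rw [hU n hn, mem_ofPred_eq, not_le] at hkU
      exact ⟨hkx, hkU.le⟩
  · intro hfin
    refine le_antisymm ?_ zero_le
    rw [← hinf]
    exact le_iInf fun n => iInf_inter_Ici_le_of_diff_finite hφ (hfin n)

/-- Let `Z = Exh_φ` for a lower semicontinuous submeasure `φ` on `ℕ`, let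
`r_k = φ({k})` and `U_n = {k : r_k ≤ 1/n}` (with `U_0 = ℕ`). If
`inf_n φ(U_n) = 0`, then `x ∈ Z` iff `x \ U_n` is finite for every `n`. -/
theorem exh_eq_iff_diff_finite_of_inf_eq_zero
    (φ : Set ℕ → ℝ≥0∞)
    (hempty : φ ∅ = 0)
    (hsingleton : ∀ a : ℕ, φ {a} < ⊤)
    (hmono : ∀ x y : Set ℕ, φ x ≤ φ (x ∪ y))
    (hsubadd : ∀ x y : Set ℕ, φ (x ∪ y) ≤ φ x + φ y)
    (hlsc : ∀ x : Set ℕ, φ x = ⨆ n : ℕ, φ (x ∩ Set.Iio n))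
    (U : ℕ → Set ℕ)
    (hU0 : U 0 = Set.univ)
    (hU : ∀ n : ℕ, 0 < n → U n = {k : ℕ | φ {k} ≤ 1 / (n : ℝ≥0∞)})
    (hinf : (⨅ n : ℕ, φ (U n)) = 0) :
    ∀ x : Set ℕ,
      (⨅ n : ℕ, φ (x ∩ Set.Ici n)) = 0 ↔ ∀ n : ℕ, (x \ U n).Finite :=
  exh_eq_iff_diff_finite_of_inf_eq_zero_general φ hmono U hU0 hU hinf
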